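/- For every integer k ≥ 1, 3(s_k·s_{k-1} + 1) = t_k·t_{k-1} + 1, where (s_k) satisfies s_0 = 0, s_1 = 1, s_{k+2} = 4s_{k+1} - s_k and (t_k) satisfies t_0 = 1, t_1 = 2, t_{k+2} = 4t_{k+1} - t_k. -/
import Mathlib


def s : ℕ → ℤ
  | 0 => 0
  | 1 => 1
  | (k+2) => 4 * s (k+1) - s k

def t : ℕ → ℤ
  | 0 => 1
  | 1 => 2
  | (k+2) => 4 * t (k+1) - t k

lemma t_eq : ∀ k : ℕ, t k = s (k+1) - 2 * s k := by
  intro k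
  induction k using Nat.twoStepInduction with
  | zero => simp [s, t]
  | one => simp [s, t]
  | more n ih1 ih2 =>
    show 4 * t (n+1) - t n = s (n+3) - 2 * s (n+2)
    have h3 : s (n+3) = 4 * s (n+2) - s (n+1) := rfl
    rw [ih1, ih2, h3]
    have h2 : s (n+2) = 4 * s (n+1) - s n := rfl
    rw [h2]; ring

lemma inv_eq : ∀ k : ℕ, s (k+1) ^ 2 - 4 * s (k+1) * s k + s k ^ 2 = 1 := by
  intro k
  induction k with
  | zero => simp [s]
  | succ n ih =>
    have h2 : s (n+2) = 4 * s (n+1) - s n := rfl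
    rw [h2]; nlinarith [ih]

theorem stmt_14 : ∀ k : ℕ, 1 ≤ k →
    3 * (s k * s (k-1) + 1) = t k * t (k-1) + 1 := by
  rintro (_ | n) hk
  · omega
  · simp only [Nat.add_sub_cancel]
    rw [t_eq, t_eq]
    have h2 : s (n+2) = 4 * s (n+1) - s n := rfl
    rw [h2]
    nlinarith [inv_eq n]
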